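/- Let G be a weak Roman graph, i.e. γ_r(G) = 2·γ(G), and let H be a graph with γ_r(H) = 2. Then γ_r(G∘H) = 2·γ(G). -/

import Mathlib

open Finset
open scoped Classical

/-- The lexicographic product of two simple graphs. -/
def lexProd {α β : Type*} (G : SimpleGraph α) (H : SimpleGraph β) :
    SimpleGraph (α × β) where
  Adj p q := G.Adj p.1 q.1 ∨ (p.1 = q.1 ∧ H.Adj p.2 q.2)
  symm := by
    constructor
    rintro ⟨a, b⟩ ⟨c, d⟩ (h | ⟨h1, h2⟩)
    · exact Or.inl h.symm
    · exact Or.inr ⟨h1.symm, h2.symm⟩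
  loopless := by
    constructor
    rintro ⟨a, b⟩ (h | ⟨h1, h2⟩)
    · exact G.irrefl h
    · exact H.irrefl h2

/-- A vertex `w` is undefended with respect to `g` if `g w = 0` and `g x = 0`
for every neighbour `x` of `w`. -/
def Undefended {α : Type*} (G : SimpleGraph α) (g : α → ℕ) (w : α) : Prop :=
  g w = 0 ∧ ∀ x, G.Adj w x → g x = 0

/-- A weak Roman dominating function. -/
def IsWRDF {α : Type*} (G : SimpleGraph α) (f : α → ℕ) : Prop :=
  (∀ v, f v ≤ 2) ∧
    ∀ v, f v = 0 → ∃ u, G.Adj u v ∧ 1 ≤ f u ∧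
      ∀ w, ¬ Undefended G (Function.update (Function.update f v 1) u (f u - 1)) w

/-- The weak Roman domination number. -/
noncomputable def weakRomanNumber {α : Type*} (G : SimpleGraph α) [Fintype α] : ℕ :=
  sInf {k | ∃ f : α → ℕ, IsWRDF G f ∧ ∑ v, f v = k}

/-- A dominating set. -/
def IsDomSet {α : Type*} (G : SimpleGraph α) (D : Finset α) : Prop :=
  ∀ v ∉ D, ∃ u ∈ D, G.Adj u v

/-- The domination number. -/
noncomputable def domNumber {α : Type*} (G : SimpleGraph α) [Fintype α] : ℕ :=
  sInf {k | ∃ D : Finset α, IsDomSet G D ∧ D.card = k}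

/-- A total dominating set. -/
def IsTotalDomSet {α : Type*} (G : SimpleGraph α) (S : Finset α) : Prop :=
  ∀ v, ∃ u ∈ S, G.Adj u v

/-- The total domination number. -/
noncomputable def totalDomNumber {α : Type*} (G : SimpleGraph α) [Fintype α] : ℕ :=
  sInf {k | ∃ S : Finset α, IsTotalDomSet G S ∧ S.card = k}

/-- A double total dominating set: every vertex has at least two neighbours in `S`. -/
def IsDoubleTotalDomSet {α : Type*} (G : SimpleGraph α) (S : Finset α) : Prop :=
  ∀ v, ∃ u₁ ∈ S, ∃ u₂ ∈ S, u₁ ≠ u₂ ∧ G.Adj u₁ v ∧ G.Adj u₂ v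

/-- The double total domination number. -/
noncomputable def doubleTotalDomNumber {α : Type*} (G : SimpleGraph α) [Fintype α] : ℕ :=
  sInf {k | ∃ S : Finset α, IsDoubleTotalDomSet G S ∧ S.card = k}

/-- A 2-packing: the closed neighbourhoods of distinct members are disjoint. -/
def IsTwoPacking {α : Type*} (G : SimpleGraph α) (X : Finset α) : Prop :=
  ∀ u ∈ X, ∀ v ∈ X, u ≠ v →
    ∀ w, ¬ ((w = u ∨ G.Adj u w) ∧ (w = v ∨ G.Adj v w))

/-- The 2-packing number. -/
noncomputable def twoPackingNumber {α : Type*} (G : SimpleGraph α) [Fintype α] : ℕ :=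
  sSup {k | ∃ X : Finset α, IsTwoPacking G X ∧ X.card = k}

/-- A secure dominating set. -/
def IsSecureDomSet {α : Type*} (G : SimpleGraph α) (S : Finset α) : Prop :=
  IsDomSet G S ∧ ∀ v ∉ S, ∃ u ∈ S, G.Adj u v ∧ IsDomSet G (insert v (S.erase u))

/-- The secure domination number. -/
noncomputable def secureDomNumber {α : Type*} (G : SimpleGraph α) [Fintype α] : ℕ :=
  sInf {k | ∃ S : Finset α, IsSecureDomSet G S ∧ S.card = k}

/-- The corona product of two graphs. -/
def corona {α β : Type*} (G₁ : SimpleGraph α) (G₂ : SimpleGraph β) :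
    SimpleGraph (α ⊕ α × β) where
  Adj x y :=
    match x, y with
    | .inl a, .inl a' => G₁.Adj a a'
    | .inl a, .inr p => a = p.1
    | .inr p, .inl a => p.1 = a
    | .inr p, .inr q => p.1 = q.1 ∧ G₂.Adj p.2 q.2
  symm := by
    constructor
    rintro (a | p) (a' | q) h
    · exact h.symm
    · exact h.symm
    · exact h.symm
    · exact ⟨h.1.symm, h.2.symm⟩
  loopless := by
    constructor
    rintro (a | p) h
    · exact G₁.irrefl h
    · exact G₂.irrefl h.2


/- Projecting a WRDF of `G ∘ H` onto `G` by capping fibre sums at 2 gives a WRDF of `G`, so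
`γ_r(G) ≤ γ_r(G ∘ H)` as soon as `H` is nonempty. Conversely, copying a WRDF of `H` of weight
`k ≥ 2` onto every fibre over a dominating set of `G` gives a WRDF of `G ∘ H`, so
`γ_r(G ∘ H) ≤ k · γ(G)`. For a weak Roman graph `G` and `γ_r(H) = 2` the two bounds meet. -/

/-- The function `f'` in the definition of a WRDF: `u` sends one guard to the vertex `v`. -/
noncomputable def moveGuard {γ : Type*} (f : γ → ℕ) (u v : γ) : γ → ℕ :=
  Function.update (Function.update f v 1) u (f u - 1)

section moveGuard

variable {γ : Type*} (f : γ → ℕ) {u v w : γ}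

lemma moveGuard_apply_source : moveGuard f u v u = f u - 1 :=
  Function.update_self ..

lemma moveGuard_apply_target (h : v ≠ u) : moveGuard f u v v = 1 := by
  rw [moveGuard, Function.update_of_ne h, Function.update_self]

lemma moveGuard_apply_of_ne (hu : w ≠ u) (hv : w ≠ v) : moveGuard f u v w = f w := by
  rw [moveGuard, Function.update_of_ne hu, Function.update_of_ne hv]

lemma moveGuard_comp {δ : Type*} {e : δ → γ} (he : Function.Injective e) (a b : δ) :
    moveGuard f (e a) (e b) ∘ e = moveGuard (f ∘ e) a b := by
  simp only [moveGuard, Function.update_comp_eq_of_injective _ he, Function.comp_apply]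

end moveGuard

section WRDF

variable {γ : Type*} (K : SimpleGraph γ) {f : γ → ℕ}

lemma isWRDF_iff : IsWRDF K f ↔ (∀ v, f v ≤ 2) ∧
    ∀ v, f v = 0 → ∃ u, K.Adj u v ∧ 1 ≤ f u ∧ ∀ w, ¬Undefended K (moveGuard f u v) w :=
  Iff.rfl

lemma IsWRDF.not_undefended (hf : IsWRDF K f) (w : γ) : ¬Undefended K f w := by
  rintro ⟨hw, hnbr⟩
  obtain ⟨u, hu, hfu, -⟩ := hf.2 w hw
  rw [hnbr u hu.symm] at hfu
  exact absurd hfu (by norm_num)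

variable [Fintype γ]

lemma weakRomanNumber_le (hf : IsWRDF K f) : weakRomanNumber K ≤ ∑ v, f v :=
  Nat.sInf_le ⟨f, hf, rfl⟩

lemma exists_isWRDF_sum_eq_weakRomanNumber :
    ∃ f : γ → ℕ, IsWRDF K f ∧ ∑ v, f v = weakRomanNumber K :=
  Nat.sInf_mem (⟨_, fun _ => 1, ⟨fun _ => one_le_two, fun _ h => absurd h one_ne_zero⟩, rfl⟩ :
    Set.Nonempty {k | ∃ f : γ → ℕ, IsWRDF K f ∧ ∑ v, f v = k})

lemma weakRomanNumber_eq_zero_of_isEmpty [IsEmpty γ] : weakRomanNumber K = 0 :=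
  Nat.eq_zero_of_le_zero <| by
    simpa using weakRomanNumber_le K (f := 0) ⟨isEmptyElim, isEmptyElim⟩

lemma exists_isDomSet_card_eq_domNumber : ∃ D : Finset γ, IsDomSet K D ∧ D.card = domNumber K :=
  Nat.sInf_mem (⟨_, Finset.univ, fun v hv => absurd (Finset.mem_univ v) hv, rfl⟩ :
    Set.Nonempty {k | ∃ D : Finset γ, IsDomSet K D ∧ D.card = k})

end WRDF

section LexProd

variable {α β : Type*} {G : SimpleGraph α} {H : SimpleGraph β}

lemma undefended_lexProd_of_undefended {g : α → ℕ} {φ : α × β → ℕ}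
    (hφ : ∀ a, g a = 0 → ∀ b, φ (a, b) = 0) {w : α} (hw : Undefended G g w) (y : β) :
    Undefended (lexProd G H) φ (w, y) := by
  refine ⟨hφ w hw.1 y, ?_⟩
  rintro ⟨a, b⟩ (hwa | ⟨rfl, -⟩)
  · exact hφ a (hw.2 a hwa) b
  · exact hφ _ hw.1 b

lemma not_undefended_lexProd_of_adj {φ : α × β → ℕ} {x a : α} {b : β} (hxa : G.Adj x a)
    (hab : φ (a, b) ≠ 0) (y : β) : ¬Undefended (lexProd G H) φ (x, y) :=
  fun h => hab (h.2 (a, b) (Or.inl hxa))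

lemma not_undefended_lexProd_of_fibre {φ : α × β → ℕ} {h : β → ℕ} {x : α}
    (hx : ∀ b, φ (x, b) = h b) {y : β} (hy : ¬Undefended H h y) :
    ¬Undefended (lexProd G H) φ (x, y) :=
  fun hu => hy ⟨hx y ▸ hu.1, fun b hb => hx b ▸ hu.2 (x, b) (Or.inr ⟨rfl, hb⟩)⟩

lemma not_undefended_lexProd_of_isDomSet {φ : α × β → ℕ} {D : Finset α} (hD : IsDomSet G D)
    (hocc : ∀ a ∈ D, ∃ b, φ (a, b) ≠ 0) {x : α} (hx : x ∉ D) (y : β) :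
    ¬Undefended (lexProd G H) φ (x, y) := by
  obtain ⟨a, ha, hax⟩ := hD x hx
  obtain ⟨b, hb⟩ := hocc a ha
  exact not_undefended_lexProd_of_adj hax.symm hb y

section Lower

variable [Fintype β] [Nonempty β] {f : α × β → ℕ}

lemma isWRDF_min_two_sum_fibre (hf : IsWRDF (lexProd G H) f) :
    IsWRDF G (fun a => min 2 (∑ b, f (a, b))) := by
  set F : α → ℕ := fun a => min 2 (∑ b, f (a, b))
  have fibre_eq_zero : ∀ a, F a = 0 → ∀ b, f (a, b) = 0 := by
    intro a ha b
    have hsum : ∑ b', f (a, b') = 0 := by simp only [F] at ha; omega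
    exact Finset.sum_eq_zero_iff.mp hsum b (Finset.mem_univ b)
  have le_sum_fibre : ∀ a b, f (a, b) ≤ ∑ b', f (a, b') := fun a b =>
    Finset.single_le_sum (f := fun b' => f (a, b')) (fun _ _ => Nat.zero_le _) (Finset.mem_univ b)
  rw [isWRDF_iff] at hf ⊢
  refine ⟨fun a => min_le_left _ _, fun u hu => ?_⟩
  obtain ⟨v⟩ := ‹Nonempty β›
  obtain ⟨⟨x, y₀⟩, hadj, hfx, hdef⟩ := hf.2 (u, v) (fibre_eq_zero u hu v)
  have hxu : G.Adj x u := hadj.resolve_right fun ⟨(hxu : x = u), _⟩ => by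
    rw [hxu, fibre_eq_zero u hu] at hfx
    exact absurd hfx (by norm_num)
  have hFx : 1 ≤ F x := le_min one_le_two (hfx.trans (le_sum_fibre x y₀))
  refine ⟨x, hxu, hFx, fun w hw => hdef (w, v) (undefended_lexProd_of_undefended ?_ hw v)⟩
  intro a ha b
  by_cases hax : a = x
  · subst hax
    -- the guard at `(a, y₀)` was the only one on its fibre
    rw [moveGuard_apply_source] at ha
    have hsum : ∑ b', f (a, b') ≤ 1 := by
      simp only [F] at ha hFx; omega
    by_cases hb : b = y₀
    · rw [hb, moveGuard_apply_source]
      have := le_sum_fibre a y₀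
      omega
    · rw [moveGuard_apply_of_ne _ (by simp [hb]) (by simp [hxu.ne])]
      have := Finset.add_le_sum (f := fun b' => f (a, b')) (fun _ _ => Nat.zero_le _)
        (Finset.mem_univ b) (Finset.mem_univ y₀) hb
      omega
  · by_cases hau : a = u
    · rw [hau, moveGuard_apply_target _ hxu.ne.symm] at ha
      exact absurd ha one_ne_zero
    · rw [moveGuard_apply_of_ne _ (by simp [hax]) (by simp [hau])] at ha ⊢
      exact fibre_eq_zero a ha b

theorem weakRomanNumber_le_weakRomanNumber_lexProd [Fintype α] :
    weakRomanNumber G ≤ weakRomanNumber (lexProd G H) := by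
  obtain ⟨f, hf, hsum⟩ := exists_isWRDF_sum_eq_weakRomanNumber (lexProd G H)
  calc weakRomanNumber G ≤ ∑ a, min 2 (∑ b, f (a, b)) :=
        weakRomanNumber_le G (isWRDF_min_two_sum_fibre hf)
    _ ≤ ∑ a, ∑ b, f (a, b) := Finset.sum_le_sum fun a _ => min_le_right _ _
    _ = weakRomanNumber (lexProd G H) := by rw [← hsum, Fintype.sum_prod_type]

end Lower

section Upper

lemma exists_ne_ne_zero_of_two_le_sum {ι : Type*} [Fintype ι] {g : ι → ℕ}
    (h : 2 ≤ ∑ i, g i) {j : ι} (hj : g j ≤ 1) : ∃ i ≠ j, g i ≠ 0 := by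
  by_contra! hc
  rw [Finset.sum_eq_single j (fun i _ hi => hc i hi) (by simp)] at h
  omega

noncomputable def lexLift (D : Finset α) (g : β → ℕ) : α × β → ℕ :=
  fun p => if p.1 ∈ D then g p.2 else 0

variable {D : Finset α} {g : β → ℕ} {a : α}

lemma lexLift_of_mem (ha : a ∈ D) (b : β) : lexLift D g (a, b) = g b := if_pos ha

lemma lexLift_comp_mk_of_mem (ha : a ∈ D) : lexLift D g ∘ Prod.mk a = g :=
  funext (lexLift_of_mem ha)

lemma sum_lexLift [Fintype α] [Fintype β] : ∑ p, lexLift D g p = D.card * ∑ b, g b := by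
  simp [lexLift, Fintype.sum_prod_type]

lemma exists_defender_lexLift_of_mem (hD : IsDomSet G D) (hg : IsWRDF H g)
    (hpos : ∃ b, g b ≠ 0) {u : α} (hu : u ∈ D) {v : β} (hv : g v = 0) :
    ∃ p, (lexProd G H).Adj p (u, v) ∧ 1 ≤ lexLift D g p ∧
      ∀ w, ¬Undefended (lexProd G H) (moveGuard (lexLift D g) p (u, v)) w := by
  obtain ⟨y₀, hy₀v, hy₀, hundef⟩ := ((isWRDF_iff H).mp hg).2 v hv
  refine ⟨(u, y₀), Or.inr ⟨rfl, hy₀v⟩, by rwa [lexLift_of_mem hu], ?_⟩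
  rintro ⟨x, y⟩
  have hfibre : ∀ a ≠ u, ∀ b,
      moveGuard (lexLift D g) (u, y₀) (u, v) (a, b) = lexLift D g (a, b) := fun a ha b =>
    moveGuard_apply_of_ne _ (ne_of_apply_ne Prod.fst ha) (ne_of_apply_ne Prod.fst ha)
  by_cases hxD : x ∈ D
  · by_cases hxu : x = u
    · subst hxu
      refine not_undefended_lexProd_of_fibre (fun b => ?_) (hundef y)
      have := congrFun (moveGuard_comp (lexLift D g) (Prod.mk_right_injective x) y₀ v) b
      rwa [lexLift_comp_mk_of_mem hxD] at this
    · exact not_undefended_lexProd_of_fibre (fun b => by rw [hfibre x hxu, lexLift_of_mem hxD])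
        (hg.not_undefended H y)
  · refine not_undefended_lexProd_of_isDomSet hD (fun a ha => ?_) hxD y
    by_cases hau : a = u
    · refine ⟨v, ?_⟩
      rw [hau, moveGuard_apply_target _ (by simp [hy₀v.ne.symm])]
      exact one_ne_zero
    · obtain ⟨b, hb⟩ := hpos
      exact ⟨b, by rwa [hfibre a hau, lexLift_of_mem ha]⟩

lemma exists_defender_lexLift_of_not_mem [Fintype β] (hD : IsDomSet G D) (hg : IsWRDF H g)
    (hg2 : 2 ≤ ∑ b, g b) {u : α} (hu : u ∉ D) (v : β) :
    ∃ p, (lexProd G H).Adj p (u, v) ∧ 1 ≤ lexLift D g p ∧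
      ∀ w, ¬Undefended (lexProd G H) (moveGuard (lexLift D g) p (u, v)) w := by
  obtain ⟨z, hzD, hzu⟩ := hD u hu
  obtain ⟨y₀, -, hy₀⟩ := Finset.exists_ne_zero_of_sum_ne_zero (s := Finset.univ) (f := g)
    (by omega)
  refine ⟨(z, y₀), Or.inl hzu, by rw [lexLift_of_mem hzD]; omega, ?_⟩
  rintro ⟨x, y⟩
  have hfibre : ∀ a ≠ z, a ≠ u → ∀ b,
      moveGuard (lexLift D g) (z, y₀) (u, v) (a, b) = lexLift D g (a, b) := fun a haz hau b =>
    moveGuard_apply_of_ne _ (ne_of_apply_ne Prod.fst haz) (ne_of_apply_ne Prod.fst hau)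
  have htarget : moveGuard (lexLift D g) (z, y₀) (u, v) (u, v) ≠ 0 := by
    rw [moveGuard_apply_target _ (by simp [hzu.ne.symm])]
    exact one_ne_zero
  by_cases hxz : x = z
  · rw [hxz]
    exact not_undefended_lexProd_of_adj hzu htarget y
  by_cases hxD : x ∈ D
  · refine not_undefended_lexProd_of_fibre (fun b => ?_) (hg.not_undefended H y)
    rw [hfibre x hxz (ne_of_mem_of_not_mem hxD hu), lexLift_of_mem hxD]
  refine not_undefended_lexProd_of_isDomSet hD (fun a ha => ?_) hxD y
  by_cases haz : a = z
  · subst haz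
    by_cases h2 : 2 ≤ g y₀
    · exact ⟨y₀, by rw [moveGuard_apply_source, lexLift_of_mem ha]; omega⟩
    · obtain ⟨b, hb, hgb⟩ := exists_ne_ne_zero_of_two_le_sum hg2 (j := y₀) (by omega)
      refine ⟨b, ?_⟩
      rwa [moveGuard_apply_of_ne _ (by simp [hb]) (by simp [hzu.ne]), lexLift_of_mem ha]
  · exact ⟨y₀, by rwa [hfibre a haz (ne_of_mem_of_not_mem ha hu), lexLift_of_mem ha]⟩

lemma isWRDF_lexLift [Fintype β] (hD : IsDomSet G D) (hg : IsWRDF H g) (hg2 : 2 ≤ ∑ b, g b) :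
    IsWRDF (lexProd G H) (lexLift D g) := by
  rw [isWRDF_iff]
  refine ⟨fun p => ?_, ?_⟩
  · unfold lexLift
    split_ifs
    exacts [hg.1 _, zero_le_two]
  rintro ⟨u, v⟩ huv
  by_cases hu : u ∈ D
  · obtain ⟨b, -, hb⟩ := Finset.exists_ne_zero_of_sum_ne_zero (s := Finset.univ) (f := g)
      (by omega)
    rw [lexLift_of_mem hu] at huv
    exact exists_defender_lexLift_of_mem hD hg ⟨b, hb⟩ hu huv
  · exact exists_defender_lexLift_of_not_mem hD hg hg2 hu v

theorem weakRomanNumber_lexProd_le [Fintype α] [Fintype β] (hH : 2 ≤ weakRomanNumber H) :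
    weakRomanNumber (lexProd G H) ≤ domNumber G * weakRomanNumber H := by
  obtain ⟨D, hD, hcard⟩ := exists_isDomSet_card_eq_domNumber G
  obtain ⟨g, hg, hsum⟩ := exists_isWRDF_sum_eq_weakRomanNumber H
  calc weakRomanNumber (lexProd G H) ≤ ∑ p, lexLift D g p :=
        weakRomanNumber_le _ (isWRDF_lexLift hD hg (hsum ▸ hH))
    _ = domNumber G * weakRomanNumber H := by rw [sum_lexLift, hcard, hsum]

end Upper

end LexProd

/-- If `G` is a weak Roman graph (`γ_r(G) = 2γ(G)`) and
`γ_r(H) = 2`, then `γ_r(G∘H) = 2γ(G)`. -/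
theorem weakRoman_lexProd_of_weakRomanGraph {α β : Type*} [Fintype α] [Fintype β]
    (G : SimpleGraph α) (H : SimpleGraph β)
    (hG : weakRomanNumber G = 2 * domNumber G)
    (hH : weakRomanNumber H = 2) :
    weakRomanNumber (lexProd G H) = 2 * domNumber G := by
  have : Nonempty β := by
    by_contra hβ
    have := not_nonempty_iff.mp hβ
    rw [weakRomanNumber_eq_zero_of_isEmpty] at hH
    exact absurd hH (by norm_num)
  refine le_antisymm ?_ (hG ▸ weakRomanNumber_le_weakRomanNumber_lexProd)
  calc weakRomanNumber (lexProd G H) ≤ domNumber G * weakRomanNumber H :=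
        weakRomanNumber_lexProd_le hH.ge
    _ = 2 * domNumber G := by rw [hH, mul_comm]
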